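/- Let $r, l \geq 1$ be integers, let $(s_j)_{j=1}^l$ and $(N_j)_{j=1}^l$ be as in the construction of $P_l$, and set $S_l = s_1 \cdots s_l$. Every element of the $r$-fold sumset $P_l^{\oplus r} = \{\sum_{i=1}^r a_i : a_i \in P_l\}$ has the form $r + \sum_{k=1}^l b^{(k)}/N_k$ with integers $b^{(k)} \in \{r, r+1, \ldots, r(2 s_k - 1)\}$; consequently $|P_l^{\oplus r}| \leq (2r)^l S_l$. -/

import Mathlib

open Finset

lemma sum_Icc_one_eq_fin {M : Type*} [AddCommMonoid M] (l : ℕ) (f : ℕ → M) :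
    ∑ k ∈ Finset.Icc 1 l, f k = ∑ k : Fin l, f (k + 1) := by
  rw [show Finset.Icc 1 l = Finset.Ico 1 (l + 1) by rw [Finset.Ico_add_one_right_eq_Icc],
    Finset.sum_Ico_eq_sum_range, Fin.sum_univ_eq_sum_range (fun k => f (k + 1))]
  simp [add_comm]

lemma prod_Icc_one_eq_fin {M : Type*} [CommMonoid M] (l : ℕ) (f : ℕ → M) :
    ∏ k ∈ Finset.Icc 1 l, f k = ∏ k : Fin l, f (k + 1) := by
  rw [show Finset.Icc 1 l = Finset.Ico 1 (l + 1) by rw [Finset.Ico_add_one_right_eq_Icc],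
    Finset.prod_Ico_eq_prod_range, Fin.prod_univ_eq_prod_range (fun k => f (k + 1))]
  simp [add_comm]

lemma P_struct (s N : ℕ → ℕ) (P : ℕ → Finset ℚ) (hP0 : P 0 = {1})
    (hPs : ∀ j, P (j + 1) =
      (P j).biUnion (fun a =>
        (Finset.range (s (j + 1))).image (fun k : ℕ => a + (2 * (k : ℚ) + 1) / (N (j + 1))))) :
    ∀ l, ∀ a ∈ P l, ∃ d : ℕ → ℕ, (∀ k ∈ Finset.Icc 1 l, d k < s k) ∧
      a = 1 + ∑ k ∈ Finset.Icc 1 l, (2 * (d k : ℚ) + 1) / (N k) := by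
  intro l
  induction l with
  | zero =>
    intro a ha
    rw [hP0, Finset.mem_singleton] at ha
    exact ⟨fun _ => 0, by simp, by simp [ha]⟩
  | succ j ih =>
    intro a ha
    rw [hPs, Finset.mem_biUnion] at ha
    obtain ⟨a', ha', hma⟩ := ha
    rw [Finset.mem_image] at hma
    obtain ⟨k, hk, rfl⟩ := hma
    rw [Finset.mem_range] at hk
    obtain ⟨d, hd, hda⟩ := ih a' ha'
    refine ⟨Function.update d (j + 1) k, ?_, ?_⟩
    · intro m hm
      rw [Finset.mem_Icc] at hm
      rcases eq_or_ne m (j + 1) with rfl | hne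
      · simpa using hk
      · rw [Function.update_of_ne hne]
        exact hd m (Finset.mem_Icc.mpr ⟨hm.1, by omega⟩)
    · rw [Finset.sum_Icc_succ_top (by omega : 1 ≤ j + 1), Function.update_self]
      have : ∑ m ∈ Finset.Icc 1 j, (2 * ((Function.update d (j+1) k) m : ℚ) + 1) / (N m)
          = ∑ m ∈ Finset.Icc 1 j, (2 * (d m : ℚ) + 1) / (N m) := by
        apply Finset.sum_congr rfl
        intro m hm
        rw [Finset.mem_Icc] at hm
        rw [Function.update_of_ne (by omega)]
      rw [this, hda]
      ring

/-- Structure of the `r`-fold sumset of `P_l` and the bound `|P_l^{⊕r}| ≤ (2r)^l S_l`. -/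
theorem stmt_3 (s n N : ℕ → ℕ) (hs : ∀ j, 0 < s j) (hn : ∀ j, 2 * s j < n j)
    (hN0 : N 0 = 1) (hN : ∀ j, N (j + 1) = N j * n (j + 1))
    (P : ℕ → Finset ℚ) (hP0 : P 0 = {1})
    (hPs : ∀ j, P (j + 1) =
      (P j).biUnion (fun a =>
        (Finset.range (s (j + 1))).image (fun k : ℕ => a + (2 * (k : ℚ) + 1) / (N (j + 1)))))
    (r l : ℕ) (hr : 1 ≤ r) (hl : 1 ≤ l) :
    (∀ b ∈ (Fintype.piFinset (fun _ : Fin r => P l)).image (fun a => ∑ i, a i),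
      ∃ c : ℕ → ℕ, (∀ k ∈ Finset.Icc 1 l, c k ∈ Finset.Icc r (r * (2 * s k - 1))) ∧
        b = r + ∑ k ∈ Finset.Icc 1 l, (c k : ℚ) / (N k)) ∧
    ((Fintype.piFinset (fun _ : Fin r => P l)).image (fun a => ∑ i, a i)).card ≤
      (2 * r) ^ l * ∏ j ∈ Finset.Icc 1 l, s j := by
  have main : ∀ b ∈ (Fintype.piFinset (fun _ : Fin r => P l)).image (fun a => ∑ i, a i),
      ∃ c : ℕ → ℕ, (∀ k ∈ Finset.Icc 1 l, c k ∈ Finset.Icc r (r * (2 * s k - 1))) ∧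
        b = r + ∑ k ∈ Finset.Icc 1 l, (c k : ℚ) / (N k) := by
    intro b hb
    rw [Finset.mem_image] at hb
    obtain ⟨a, ha, rfl⟩ := hb
    rw [Fintype.mem_piFinset] at ha
    choose d hd hda using fun i => P_struct s N P hP0 hPs l (a i) (ha i)
    refine ⟨fun k => ∑ i, (2 * d i k + 1), ?_, ?_⟩
    · intro k hk
      rw [Finset.mem_Icc]
      constructor
      · calc r = ∑ _i : Fin r, 1 := by simp
          _ ≤ ∑ i, (2 * d i k + 1) := Finset.sum_le_sum (fun i _ => by omega)
      · calc ∑ i, (2 * d i k + 1) ≤ ∑ _i : Fin r, (2 * s k - 1) := by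
              apply Finset.sum_le_sum
              intro i _
              have := hd i k hk
              have := hs k
              omega
          _ = r * (2 * s k - 1) := by simp [mul_comm]
    · calc ∑ i, a i = ∑ i : Fin r, (1 + ∑ k ∈ Finset.Icc 1 l, (2 * (d i k : ℚ) + 1) / (N k)) :=
            Finset.sum_congr rfl (fun i _ => hda i)
        _ = r + ∑ k ∈ Finset.Icc 1 l, (∑ i : Fin r, (2 * (d i k : ℚ) + 1)) / (N k) := by
            rw [Finset.sum_add_distrib]
            congr 1
            · simp
            · rw [Finset.sum_comm]
              exact Finset.sum_congr rfl fun k _ => (Finset.sum_div _ _ _).symm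
        _ = r + ∑ k ∈ Finset.Icc 1 l, ((∑ i : Fin r, (2 * d i k + 1) : ℕ) : ℚ) / (N k) := by
            congr 1
            apply Finset.sum_congr rfl
            intro k _
            congr 1
            push_cast
            rfl
  refine ⟨main, ?_⟩
  have hsub : (Fintype.piFinset (fun _ : Fin r => P l)).image (fun a => ∑ i, a i) ⊆
      (Fintype.piFinset (fun k : Fin l => Finset.Icc r (r * (2 * s (k + 1) - 1)))).image
        (fun c => (r : ℚ) + ∑ k : Fin l, (c k : ℚ) / (N (k + 1))) := by
    intro b hb
    obtain ⟨c, hc, hbc⟩ := main b hb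
    rw [Finset.mem_image]
    refine ⟨fun k => c (k + 1), ?_, ?_⟩
    · rw [Fintype.mem_piFinset]
      intro k
      exact hc (k + 1) (Finset.mem_Icc.mpr ⟨by omega, by omega⟩)
    · rw [hbc, sum_Icc_one_eq_fin l (fun k => (c k : ℚ) / (N k))]
  calc ((Fintype.piFinset (fun _ : Fin r => P l)).image (fun a => ∑ i, a i)).card
      ≤ ((Fintype.piFinset (fun k : Fin l => Finset.Icc r (r * (2 * s (k + 1) - 1)))).image
          (fun c => (r : ℚ) + ∑ k : Fin l, (c k : ℚ) / (N (k + 1)))).card :=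
        Finset.card_le_card hsub
    _ ≤ (Fintype.piFinset (fun k : Fin l => Finset.Icc r (r * (2 * s (k + 1) - 1)))).card :=
        Finset.card_image_le
    _ = ∏ k : Fin l, (Finset.Icc r (r * (2 * s (k + 1) - 1))).card := by
        rw [Fintype.card_piFinset]
    _ ≤ ∏ k : Fin l, (2 * r * s (k + 1)) := by
        apply Finset.prod_le_prod'
        intro k _
        rw [Nat.card_Icc]
        obtain ⟨m, hm⟩ := Nat.exists_eq_add_of_le (hs (k + 1))
        rw [hm, show 2 * (1 + m) - 1 = 2 * m + 1 by omega]
        calc r * (2 * m + 1) + 1 - r ≤ r * (2 * m + 1) + 1 := Nat.sub_le _ _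
          _ ≤ 2 * r * (1 + m) := by nlinarith
    _ = (2 * r) ^ l * ∏ j ∈ Finset.Icc 1 l, s j := by
        rw [Finset.prod_mul_distrib, Finset.prod_const, Finset.card_univ, Fintype.card_fin,
          prod_Icc_one_eq_fin l s]
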